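/- Let g be a nilpotent Lie algebra with Z(g) = [g,g] of odd dimension, such that ad_x : g → [g,g] is surjective for every x ∉ Z(g). Then g admits no integrable complex structure. -/

import Mathlib

/-!
If `z` is central, the Nijenhuis condition collapses to `⁅J z, J y⁆ = J ⁅J z, y⁆`. Were `J z`
not central, `ad_{J z}` would hit the central element `z`, say `z = ⁅J z, y⁆`; then
`J z = ⁅J z, J y⁆` is a bracket, hence central after all. So `J` restricts to a complex
structure on the centre, whose dimension must therefore be even.
-/

open Module LieAlgebra

theorem Module.even_finrank_of_comp_self_eq_neg_id {K V : Type*} [Field K] [LinearOrder K]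
    [IsStrictOrderedRing K] [AddCommGroup V] [Module K V] {f : V →ₗ[K] V}
    (hf : f ∘ₗ f = -LinearMap.id) : Even (finrank K V) := by
  by_contra hodd
  have hdet := congrArg LinearMap.det hf
  rw [LinearMap.det_comp, ← neg_one_smul K LinearMap.id, LinearMap.det_smul, LinearMap.det_id,
    mul_one, (Nat.not_even_iff_odd.mp hodd).neg_one_pow] at hdet
  linarith [mul_self_nonneg (LinearMap.det f)]

namespace LieAlgebra

variable {R L : Type*} [CommRing R] [LieRing L] [LieAlgebra R L]

theorem lie_mem_derivedSeries_one (x y : L) : ⁅x, y⁆ ∈ derivedSeries R L 1 := by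
  change ⁅x, y⁆ ∈ (derivedSeries R L 1 : Submodule R L)
  rw [coe_derivedSeries_one_eq]
  exact Submodule.subset_span ⟨x, y, rfl⟩

theorem lie_eq_zero_of_mem_center {z : L} (hz : z ∈ center R L) (y : L) : ⁅z, y⁆ = 0 := by
  rw [← lie_skew, hz y, neg_zero]

/-- The vanishing of the Nijenhuis tensor of `J`. -/
def IsIntegrable (J : L →ₗ[R] L) : Prop :=
  ∀ x y : L, ⁅x, y⁆ - ⁅J x, J y⁆ + J ⁅J x, y⁆ + J ⁅x, J y⁆ = 0

variable {J : L →ₗ[R] L}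

theorem IsIntegrable.lie_apply_apply_of_mem_center (hJ : IsIntegrable J) {z : L}
    (hz : z ∈ center R L) (y : L) : ⁅J z, J y⁆ = J ⁅J z, y⁆ := by
  have h := hJ z y
  rwa [lie_eq_zero_of_mem_center hz, lie_eq_zero_of_mem_center hz, map_zero, add_zero, zero_sub,
    neg_add_eq_zero] at h

theorem IsIntegrable.apply_mem_center (hJ : IsIntegrable J)
    (hZC : (center R L : Submodule R L) = derivedSeries R L 1)
    (hsurj : ∀ x : L, x ∉ center R L → ∀ c ∈ derivedSeries R L 1, ∃ y : L, ⁅x, y⁆ = c)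
    {z : L} (hz : z ∈ center R L) : J z ∈ center R L := by
  by_contra hJz
  have hz' : z ∈ (derivedSeries R L 1 : Submodule R L) := hZC ▸ hz
  obtain ⟨y, hy⟩ := hsurj (J z) hJz z hz'
  have hJz_eq : J z = ⁅J z, J y⁆ := by rw [hJ.lie_apply_apply_of_mem_center hz, hy]
  have hJz' : J z ∈ (center R L : Submodule R L) := hZC ▸ hJz_eq ▸ lie_mem_derivedSeries_one _ _
  exact hJz hJz'

end LieAlgebra

theorem stmt_16_general (g : Type*) [LieRing g] [LieAlgebra ℝ g]
    (hZC : (LieAlgebra.center ℝ g : Submodule ℝ g) =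
      (LieAlgebra.derivedSeries ℝ g 1 : Submodule ℝ g))
    (hodd : Odd (Module.finrank ℝ (LieAlgebra.center ℝ g : Submodule ℝ g)))
    (hsurj : ∀ x : g, x ∉ LieAlgebra.center ℝ g →
      ∀ c ∈ LieAlgebra.derivedSeries ℝ g 1, ∃ y : g, ⁅x, y⁆ = c) :
    ¬ ∃ J : g →ₗ[ℝ] g, J ∘ₗ J = -LinearMap.id ∧
      ∀ x y : g, ⁅x, y⁆ - ⁅J x, J y⁆ + J ⁅J x, y⁆ + J ⁅x, J y⁆ = 0 := by
  rintro ⟨J, hJ2, hJ⟩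
  have hJZ : Set.MapsTo J (center ℝ g : Submodule ℝ g) (center ℝ g : Submodule ℝ g) :=
    fun _ hz => IsIntegrable.apply_mem_center hJ hZC hsurj hz
  have hJZ2 : J.restrict hJZ ∘ₗ J.restrict hJZ = -LinearMap.id := by
    ext z
    exact LinearMap.congr_fun hJ2 z
  exact Nat.not_even_iff_odd.mpr hodd (even_finrank_of_comp_self_eq_neg_id hJZ2)

/-- A nilpotent Lie algebra with `Z(g) = [g,g]` of odd dimension, such that `ad_x`
surjects onto `[g,g]` for every non-central `x`, admits no integrable complex structure. -/
theorem stmt_16 (g : Type*) [LieRing g] [LieAlgebra ℝ g] [LieRing.IsNilpotent g]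
    [Module.Finite ℝ g]
    (hZC : (LieAlgebra.center ℝ g : Submodule ℝ g) =
      (LieAlgebra.derivedSeries ℝ g 1 : Submodule ℝ g))
    (hodd : Odd (Module.finrank ℝ (LieAlgebra.center ℝ g : Submodule ℝ g)))
    (hsurj : ∀ x : g, x ∉ LieAlgebra.center ℝ g →
      ∀ c ∈ LieAlgebra.derivedSeries ℝ g 1, ∃ y : g, ⁅x, y⁆ = c) :
    ¬ ∃ J : g →ₗ[ℝ] g, J ∘ₗ J = -LinearMap.id ∧
      ∀ x y : g, ⁅x, y⁆ - ⁅J x, J y⁆ + J ⁅J x, y⁆ + J ⁅x, J y⁆ = 0 :=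
  stmt_16_general g hZC hodd hsurj
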